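/- For the dual zero vanna strike k⁺ (with d1(k⁺,I) = 0), the third-order operator satisfies ∂/∂x (∂²/∂x² - ∂/∂x) H(t,T,x,k⁺,v) = (e^x/16) · N'(d1(k⁺,v)) / (v⁹ (T-t)^{5/2}) · [ (T-t)²(I⁸ + 2I⁶v² - 2I²v⁶ - v⁸) - 24(T-t)(I⁴v² + I²v⁴) + 48v⁴ ], where H := (∂³/∂x³ - ∂²/∂x²)BS. -/

import Mathlib

open MeasureTheory Real Filter

/-- Standard normal density N'. -/
noncomputable def normPdf (z : ℝ) : ℝ := Real.exp (-z ^ 2 / 2) / Real.sqrt (2 * Real.pi)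

/-- Standard normal CDF N. -/
noncomputable def normCdf (z : ℝ) : ℝ := ∫ u in Set.Iic z, normPdf u

/-- Black-Scholes d1. -/
noncomputable def bsD1 (t T x k σ : ℝ) : ℝ :=
  (x - k) / (σ * Real.sqrt (T - t)) + σ / 2 * Real.sqrt (T - t)

/-- Black-Scholes d2. -/
noncomputable def bsD2 (t T x k σ : ℝ) : ℝ :=
  (x - k) / (σ * Real.sqrt (T - t)) - σ / 2 * Real.sqrt (T - t)

/-- Zero-rate Black-Scholes call price. -/
noncomputable def bsPrice (t T x k σ : ℝ) : ℝ :=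
  Real.exp x * normCdf (bsD1 t T x k σ) - Real.exp k * normCdf (bsD2 t T x k σ)

/-- The operator H = (∂³/∂x³ - ∂²/∂x²) applied to the Black-Scholes price, as a function of x. -/
noncomputable def bsH (t T k σ : ℝ) (x : ℝ) : ℝ :=
  iteratedDeriv 3 (fun y => bsPrice t T y k σ) x -
    iteratedDeriv 2 (fun y => bsPrice t T y k σ) x

set_option maxHeartbeats 1000000 in
lemma normPdf_cont : Continuous normPdf := by
  unfold normPdf; fun_prop

lemma normPdf_integrable : Integrable normPdf := by
  have h : Integrable (fun u : ℝ => Real.exp (-(1/2 : ℝ) * u ^ 2)) :=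
    integrable_exp_neg_mul_sq (by norm_num)
  refine (h.div_const (Real.sqrt (2 * Real.pi))).congr ?_
  filter_upwards with u
  unfold normPdf
  congr 2
  ring

lemma hasDerivAt_normCdf (z : ℝ) : HasDerivAt normCdf (normPdf z) z := by
  have key : normCdf = fun y => normCdf 0 + ∫ u in (0:ℝ)..y, normPdf u := by
    funext y
    unfold normCdf
    rw [← intervalIntegral.integral_Iic_sub_Iic normPdf_integrable.integrableOn
      normPdf_integrable.integrableOn]
    ring
  rw [key]
  exact (intervalIntegral.integral_hasDerivAt_right
    normPdf_integrable.intervalIntegrable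
    normPdf_cont.stronglyMeasurable.stronglyMeasurableAtFilter
    normPdf_cont.continuousAt).const_add _

lemma hasDerivAt_normPdf (z : ℝ) : HasDerivAt normPdf (-z * normPdf z) z := by
  have h : HasDerivAt (fun z : ℝ => -z ^ 2 / 2) (-z) z := by
    have := ((hasDerivAt_pow 2 z).neg).div_const 2
    simpa using this.congr_deriv (by push_cast; ring)
  have := (h.exp).div_const (Real.sqrt (2 * Real.pi))
  unfold normPdf
  refine this.congr_deriv ?_
  ring

/-- product rule for ψ-type functions -/
lemma hasDerivAt_psi (k s : ℝ) (hs : s ≠ 0) (P P' : ℝ → ℝ)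
    (hP : ∀ u, HasDerivAt P (P' u) u) (y : ℝ) :
    HasDerivAt (fun y => Real.exp y * normPdf ((y - k)/s + s/2) * P ((y - k)/s + s/2))
      (Real.exp y * normPdf ((y - k)/s + s/2) *
        (P ((y - k)/s + s/2) * (1 - ((y - k)/s + s/2)/s) + P' ((y - k)/s + s/2) / s)) y := by
  have hD : HasDerivAt (fun y : ℝ => (y - k)/s + s/2) (1/s) y := by
    simpa using (((hasDerivAt_id y).sub_const k).div_const s).add_const (s/2)
  have h2 : HasDerivAt (fun y : ℝ => normPdf ((y - k)/s + s/2))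
      ((-((y - k)/s + s/2) * normPdf ((y - k)/s + s/2)) * (1/s)) y :=
    (hasDerivAt_normPdf _).comp y hD
  have h3 : HasDerivAt (fun y : ℝ => P ((y - k)/s + s/2)) (P' ((y - k)/s + s/2) * (1/s)) y :=
    (hP _).comp y hD
  have h := ((Real.hasDerivAt_exp y).mul h2).mul h3
  refine h.congr_deriv ?_
  simp only [Pi.mul_apply]
  field_simp
  ring

set_option maxHeartbeats 1000000 in
/-- ∂/∂x(∂²/∂x² - ∂/∂x)H at the dual zero vanna strike k⁺ = x + I²(T-t)/2. -/
theorem bs_d3H_dual_zero_vanna (t T x I v : ℝ) (ht : t < T) (hI : 0 < I) (hv : 0 < v) :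
    deriv (fun y => iteratedDeriv 2 (bsH t T (x + I ^ 2 * (T - t) / 2) v) y
        - deriv (bsH t T (x + I ^ 2 * (T - t) / 2) v) y) x
      = Real.exp x / 16 * normPdf (bsD1 t T x (x + I ^ 2 * (T - t) / 2) v) /
          (v ^ 9 * (T - t) ^ ((5:ℝ) / 2)) *
          ((T - t) ^ 2 * (I ^ 8 + 2 * I ^ 6 * v ^ 2 - 2 * I ^ 2 * v ^ 6 - v ^ 8)
            - 24 * (T - t) * (I ^ 4 * v ^ 2 + I ^ 2 * v ^ 4) + 48 * v ^ 4) := by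

  have hτ : 0 < T - t := sub_pos.2 ht
  set k := x + I ^ 2 * (T - t) / 2 with hk
  set w := Real.sqrt (T - t) with hw_def
  have hw : 0 < w := Real.sqrt_pos.2 hτ
  set s := v * w with hs_def
  have hs : 0 < s := mul_pos hv hw
  have hsne : s ≠ 0 := hs.ne'
  -- d1 as a function of y
  have hD1eq : ∀ y, bsD1 t T y k v = (y - k)/s + s/2 := by
    intro y
    unfold bsD1
    rw [← hw_def, ← hs_def]
    ring
  have hD2eq : ∀ y, bsD2 t T y k v = (y - k)/s + s/2 - s := by
    intro y
    unfold bsD2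
    rw [← hw_def, ← hs_def]
    ring
  have hD : ∀ y : ℝ, HasDerivAt (fun y : ℝ => (y - k)/s + s/2) (1/s) y := by
    intro y
    simpa using (((hasDerivAt_id y).sub_const k).div_const s).add_const (s/2)
  -- key identity
  have hident : ∀ y : ℝ, Real.exp k * normPdf ((y - k)/s + s/2 - s)
      = Real.exp y * normPdf ((y - k)/s + s/2) := by
    intro y
    unfold normPdf
    have h2π : Real.sqrt (2 * Real.pi) ≠ 0 :=
      (Real.sqrt_pos.2 (by positivity)).ne'
    field_simp
    rw [← Real.exp_add, ← Real.exp_add]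
    congr 1
    field_simp
    ring
  -- first derivative of the price
  have hf : ∀ y : ℝ, HasDerivAt (fun y => bsPrice t T y k v)
      (Real.exp y * normCdf ((y - k)/s + s/2)) y := by
    intro y
    have hprice : (fun y => bsPrice t T y k v)
        = fun y => Real.exp y * normCdf ((y - k)/s + s/2)
            - Real.exp k * normCdf ((y - k)/s + s/2 - s) := by
      funext y
      unfold bsPrice
      rw [hD1eq, hD2eq]
    rw [hprice]
    have hA := (Real.hasDerivAt_exp y).mul ((hasDerivAt_normCdf _).comp y (hD y))
    have hB := (((hasDerivAt_normCdf ((y - k)/s + s/2 - s)).comp y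
      ((hD y).sub_const s))).const_mul (Real.exp k)
    refine (hA.sub hB).congr_deriv ?_
    have h := hident y
    simp only [Function.comp]
    linear_combination (-(1/s)) * h
  -- ψ chain
  have hψ0 : ∀ y : ℝ, HasDerivAt (fun y => Real.exp y * normPdf ((y - k)/s + s/2))
      (Real.exp y * normPdf ((y - k)/s + s/2) * (1 - ((y - k)/s + s/2)/s)) y := by
    intro y
    have h := (Real.hasDerivAt_exp y).mul ((hasDerivAt_normPdf _).comp y (hD y))
    refine h.congr_deriv ?_
    simp only [Function.comp_apply]
    field_simp
    ring
  have hψ1 : ∀ y : ℝ, HasDerivAt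
      (fun y => Real.exp y * normPdf ((y - k)/s + s/2) * (1 - ((y - k)/s + s/2)/s))
      (Real.exp y * normPdf ((y - k)/s + s/2)
        * ((1 - ((y - k)/s + s/2)/s)^2 - 1/s^2)) y := by
    intro y
    have h := hasDerivAt_psi k s hsne (fun u => 1 - u/s) (fun u => -(1/s))
      (fun u => by simpa using ((hasDerivAt_id u).div_const s).const_sub 1) y
    refine h.congr_deriv ?_
    field_simp
    ring
  have hψ2 : ∀ y : ℝ, HasDerivAt
      (fun y => Real.exp y * normPdf ((y - k)/s + s/2)
        * ((1 - ((y - k)/s + s/2)/s)^2 - 1/s^2))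
      (Real.exp y * normPdf ((y - k)/s + s/2)
        * ((1 - ((y - k)/s + s/2)/s)^3 - 3*(1 - ((y - k)/s + s/2)/s)/s^2)) y := by
    intro y
    have hq : ∀ u : ℝ, HasDerivAt (fun u : ℝ => (1 - u/s)^2 - 1/s^2)
        (2*(1 - u/s)*(-(1/s))) u := by
      intro u
      have h1 : HasDerivAt (fun u : ℝ => 1 - u/s) (-(1/s)) u := by
        simpa using ((hasDerivAt_id u).div_const s).const_sub 1
      exact ((h1.pow 2).sub_const (1/s^2)).congr_deriv (by push_cast; ring)
    have h := hasDerivAt_psi k s hsne (fun u => (1 - u/s)^2 - 1/s^2)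
      (fun u => 2*(1 - u/s)*(-(1/s))) hq y
    refine h.congr_deriv ?_
    field_simp
    ring
  have hψ3 : ∀ y : ℝ, HasDerivAt
      (fun y => Real.exp y * normPdf ((y - k)/s + s/2)
        * ((1 - ((y - k)/s + s/2)/s)^3 - 3*(1 - ((y - k)/s + s/2)/s)/s^2))
      (Real.exp y * normPdf ((y - k)/s + s/2)
        * ((1 - ((y - k)/s + s/2)/s)^4 - 6*(1 - ((y - k)/s + s/2)/s)^2/s^2 + 3/s^4)) y := by
    intro y
    have hq : ∀ u : ℝ, HasDerivAt (fun u : ℝ => (1 - u/s)^3 - 3*(1 - u/s)/s^2)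
        (3*(1 - u/s)^2*(-(1/s)) - 3*(-(1/s))/s^2) u := by
      intro u
      have h1 : HasDerivAt (fun u : ℝ => 1 - u/s) (-(1/s)) u := by
        simpa using ((hasDerivAt_id u).div_const s).const_sub 1
      have h2 := (h1.pow 3).sub (((h1.const_mul 3)).div_const (s^2))
      refine h2.congr_deriv ?_
      push_cast
      ring
    have h := hasDerivAt_psi k s hsne (fun u => (1 - u/s)^3 - 3*(1 - u/s)/s^2)
      (fun u => 3*(1 - u/s)^2*(-(1/s)) - 3*(-(1/s))/s^2) hq y
    refine h.congr_deriv ?_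
    field_simp
    ring
  -- level-by-level deriv equalities
  have e1 : deriv (fun y => bsPrice t T y k v)
      = fun y => Real.exp y * normCdf ((y - k)/s + s/2) :=
    funext fun y => (hf y).deriv
  have hN : ∀ y : ℝ, HasDerivAt (fun y => Real.exp y * normCdf ((y - k)/s + s/2))
      (Real.exp y * normCdf ((y - k)/s + s/2)
        + Real.exp y * normPdf ((y - k)/s + s/2) / s) y := by
    intro y
    have h := (Real.hasDerivAt_exp y).mul ((hasDerivAt_normCdf _).comp y (hD y))
    refine h.congr_deriv ?_
    simp only [Function.comp_apply]
    field_simp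
  have e2 : deriv (fun y => Real.exp y * normCdf ((y - k)/s + s/2))
      = fun y => Real.exp y * normCdf ((y - k)/s + s/2)
          + Real.exp y * normPdf ((y - k)/s + s/2) / s :=
    funext fun y => (hN y).deriv
  have e3 : deriv (fun y => Real.exp y * normCdf ((y - k)/s + s/2)
        + Real.exp y * normPdf ((y - k)/s + s/2) / s)
      = fun y => (Real.exp y * normCdf ((y - k)/s + s/2)
          + Real.exp y * normPdf ((y - k)/s + s/2) / s)
          + Real.exp y * normPdf ((y - k)/s + s/2) * (1 - ((y - k)/s + s/2)/s) / s :=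
    funext fun y => ((hN y).add ((hψ0 y).div_const s)).deriv
  -- bsH in closed form
  have hH : bsH t T k v = fun y => Real.exp y * normPdf ((y - k)/s + s/2)
      * (1 - ((y - k)/s + s/2)/s) / s := by
    funext y
    unfold bsH
    rw [show (3:ℕ) = 2 + 1 by rfl, iteratedDeriv_succ, show (2:ℕ) = 1 + 1 by rfl,
      iteratedDeriv_succ, iteratedDeriv_one]
    rw [e1, e2, e3]
    ring
  have eH1 : deriv (bsH t T k v)
      = fun y => Real.exp y * normPdf ((y - k)/s + s/2)
          * ((1 - ((y - k)/s + s/2)/s)^2 - 1/s^2) / s := by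
    rw [hH]
    exact funext fun y => ((hψ1 y).div_const s).deriv
  have eH2 : iteratedDeriv 2 (bsH t T k v)
      = fun y => Real.exp y * normPdf ((y - k)/s + s/2)
          * ((1 - ((y - k)/s + s/2)/s)^3 - 3*(1 - ((y - k)/s + s/2)/s)/s^2) / s := by
    rw [show iteratedDeriv 2 (bsH t T k v) = deriv (iteratedDeriv 1 (bsH t T k v)) from
      iteratedDeriv_succ, iteratedDeriv_one, eH1]
    exact funext fun y => ((hψ2 y).div_const s).deriv
  -- compute the target derivative
  have hfinal : deriv (fun y => iteratedDeriv 2 (bsH t T k v) y - deriv (bsH t T k v) y) x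
      = Real.exp x * normPdf ((x - k)/s + s/2)
          * ((1 - ((x - k)/s + s/2)/s)^4 - 6*(1 - ((x - k)/s + s/2)/s)^2/s^2 + 3/s^4) / s
        - Real.exp x * normPdf ((x - k)/s + s/2)
          * ((1 - ((x - k)/s + s/2)/s)^3 - 3*(1 - ((x - k)/s + s/2)/s)/s^2) / s := by
    simp only [eH1, eH2]
    exact (((hψ3 x).div_const s).sub ((hψ2 x).div_const s)).deriv
  rw [hfinal, hD1eq]
  -- final algebra
  have hw5 : (T - t) ^ ((5:ℝ)/2) = w^5 := by
    have h1 : (T - t) ^ ((5:ℝ)/2) = ((T - t) ^ ((1:ℝ)/2))^(5:ℕ) := by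
      rw [← Real.rpow_natCast ((T - t) ^ ((1:ℝ)/2)) 5, ← Real.rpow_mul hτ.le]
      norm_num
    rw [h1, ← Real.sqrt_eq_rpow, ← hw_def]
  have hτw : T - t = w^2 := (Real.sq_sqrt hτ.le).symm
  have hxk : x - k = -(I^2 * w^2 / 2) := by rw [hk, hτw]; ring
  rw [hw5, hxk, hs_def, hτw]
  have hvne : v ≠ 0 := hv.ne'
  have hwne : w ≠ 0 := hw.ne'
  field_simp
  ring
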